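/- In the two-row model M2 with T rounds (row 2 revealed with per-round reward R2, row 1 unrevealed with maximum reward R1 > R2, unlearned reward C1 ≤ R1, learning probability α ∈ (0,1)), the optimal policy is a threshold policy: there exists t* ∈ {1,…,T+1} such that it is optimal to play row 1 at every round t < t* while row 1 is unlearned, to play row 2 at every round t ≥ t* while row 1 is unlearned, and to play row 1 forever once it is learned. -/

import Mathlib

/-!
Let `D n = R1 * n - WM2 n` be the value lost, with `n` rounds left, by not having learned row 1
yet. Exploring now gains `C1 - R2 + α * D n` over exploiting, so it suffices that `D` is
nondecreasing: the gain then shrinks as the rounds go by, and the rounds at which exploring is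
optimal form an initial segment. `D` grows because one round costs the unlearned state at most
`R1 - C1` when exploring (the invariant `α * D n ≤ R1 - C1`) and `R1 - R2` when exploiting.
-/

/-- Optimal expected payoff in the two-row model M2 with `n` rounds remaining, in the
state where row 1 is still unlearned: playing unlearned row 1 yields `C1` immediately
and the human learns it with probability `α` after responding (a learned row 1 then
yields `R1` deterministically each round); playing the revealed row 2 yields `R2`. -/
noncomputable def WM2 (α R1 R2 C1 : ℝ) : ℕ → ℝ
  | 0 => 0
  | n + 1 => max (C1 + α * (R1 * (n : ℝ)) + (1 - α) * WM2 α R1 R2 C1 n)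
      (R2 + WM2 α R1 R2 C1 n)

theorem exists_threshold_of_downward_closed (P : ℕ → Prop) (T : ℕ)
    (hP : ∀ s t, s ≤ t → P t → P s) :
    ∃ tstar, 1 ≤ tstar ∧ tstar ≤ T + 1 ∧ ∀ t, 1 ≤ t → t ≤ T → (P t ↔ t < tstar) := by
  classical
  have hex : ∃ t, 1 ≤ t ∧ (t = T + 1 ∨ ¬P t) := ⟨T + 1, by omega, .inl rfl⟩
  obtain ⟨hpos, hstop⟩ := Nat.find_spec hex
  refine ⟨Nat.find hex, hpos, Nat.find_min' hex ⟨by omega, .inl rfl⟩, fun t ht1 htT => ⟨?_, ?_⟩⟩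
  · intro hPt
    by_contra! hge
    rcases hstop with hlast | hfail
    · omega
    · exact hfail (hP _ _ hge hPt)
  · intro hlt
    by_contra hPt
    exact Nat.find_min hex hlt ⟨ht1, .inr hPt⟩

section M2

variable (α R1 R2 C1 : ℝ)

theorem WM2_succ (n : ℕ) :
    WM2 α R1 R2 C1 (n + 1) = max (C1 + α * (R1 * (n : ℝ)) + (1 - α) * WM2 α R1 R2 C1 n)
      (R2 + WM2 α R1 R2 C1 n) := rfl

noncomputable def valueGapM2 (n : ℕ) : ℝ := R1 * n - WM2 α R1 R2 C1 n

noncomputable def exploreAdvantageM2 (n : ℕ) : ℝ := C1 - R2 + α * valueGapM2 α R1 R2 C1 n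

theorem explore_sub_exploit_eq_exploreAdvantageM2 (n : ℕ) :
    (C1 + α * (R1 * n) + (1 - α) * WM2 α R1 R2 C1 n) - (R2 + WM2 α R1 R2 C1 n)
      = exploreAdvantageM2 α R1 R2 C1 n := by
  simp only [exploreAdvantageM2, valueGapM2]; ring

variable {α R1 R2 C1}

theorem mul_valueGapM2_le (hα0 : 0 ≤ α) (hα1 : α ≤ 1) (hC1 : C1 ≤ R1) (n : ℕ) :
    α * valueGapM2 α R1 R2 C1 n ≤ R1 - C1 := by
  induction n with
  | zero => simp only [valueGapM2, WM2, Nat.cast_zero, mul_zero, sub_zero]; linarith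
  | succ n ih =>
    have hexplore : C1 + α * (R1 * n) + (1 - α) * WM2 α R1 R2 C1 n ≤ WM2 α R1 R2 C1 (n + 1) := by
      rw [WM2_succ]; exact le_max_left _ _
    have h1 := mul_le_mul_of_nonneg_left hexplore hα0
    have h2 := mul_le_mul_of_nonneg_left ih (sub_nonneg.2 hα1)
    simp only [valueGapM2] at h2 ⊢
    push_cast
    linear_combination h1 + h2

theorem valueGapM2_monotone (hα0 : 0 ≤ α) (hα1 : α ≤ 1) (hR : R2 ≤ R1) (hC1 : C1 ≤ R1) :
    Monotone (valueGapM2 α R1 R2 C1) := by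
  refine monotone_nat_of_le_succ fun n => ?_
  have hinv := mul_valueGapM2_le (R2 := R2) hα0 hα1 hC1 n
  simp only [valueGapM2] at hinv ⊢
  rw [WM2_succ]
  push_cast
  rcases max_choice (C1 + α * (R1 * n) + (1 - α) * WM2 α R1 R2 C1 n)
    (R2 + WM2 α R1 R2 C1 n) with h | h <;> rw [h] <;> linarith

theorem exploreAdvantageM2_monotone (hα0 : 0 ≤ α) (hα1 : α ≤ 1) (hR : R2 ≤ R1)
    (hC1 : C1 ≤ R1) : Monotone (exploreAdvantageM2 α R1 R2 C1) := fun _ _ hmn =>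
  add_le_add_right (mul_le_mul_of_nonneg_left (valueGapM2_monotone hα0 hα1 hR hC1 hmn) hα0) _

end M2

/-- In the two-row model M2 over `T` rounds, the optimal policy is a threshold policy:
there is a threshold round `t*` such that while row 1 is unlearned it is optimal to
play row 1 before round `t*` and row 2 from round `t*` on, and once row 1 is learned
it is optimal to play row 1 forever. -/
theorem stmt_11 (α R1 R2 C1 : ℝ) (T : ℕ)
    (hα0 : 0 < α) (hα1 : α < 1) (hR : R2 < R1) (hC1 : C1 ≤ R1) :
    ∃ tstar : ℕ, 1 ≤ tstar ∧ tstar ≤ T + 1 ∧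
      (∀ t : ℕ, 1 ≤ t → t ≤ T → t < tstar →
        R2 + WM2 α R1 R2 C1 (T - t)
          ≤ C1 + α * (R1 * ((T : ℝ) - t)) + (1 - α) * WM2 α R1 R2 C1 (T - t)) ∧
      (∀ t : ℕ, 1 ≤ t → t ≤ T → tstar ≤ t →
        C1 + α * (R1 * ((T : ℝ) - t)) + (1 - α) * WM2 α R1 R2 C1 (T - t)
          ≤ R2 + WM2 α R1 R2 C1 (T - t)) ∧
      (∀ n : ℕ, R2 + R1 * (n : ℝ) ≤ R1 + R1 * (n : ℝ)) := by
  have hmono := exploreAdvantageM2_monotone hα0.le hα1.le hR.le hC1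
  obtain ⟨tstar, hpos, hle, hthreshold⟩ := exists_threshold_of_downward_closed
    (fun t => 0 ≤ exploreAdvantageM2 α R1 R2 C1 (T - t)) T
    fun s t hst ht => ht.trans (hmono (Nat.sub_le_sub_left hst T))
  refine ⟨tstar, hpos, hle, fun t ht1 htT hlt => ?_, fun t ht1 htT hge => ?_, fun n => by linarith⟩
  all_goals
    have hgain := explore_sub_exploit_eq_exploreAdvantageM2 α R1 R2 C1 (T - t)
    rw [Nat.cast_sub htT] at hgain
  · linarith [(hthreshold t ht1 htT).2 hlt]
  · linarith [(hthreshold t ht1 htT).not.2 hge.not_gt]
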